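/- arXiv:1310.5032 — 2 statements merged into one kernel-verified Lean document; each statement's English description precedes it below -/
import Mathlib

section
/- FA(fin,=) = RAT: an ω-language is accepted by some finite automaton under the acceptance condition (fin,=) if and only if it is ω-rational. -/
open Set

/-- A finite automaton used for recognizing ω-words over the alphabet `A`:
a finite type of states, a transition relation, an initial state and an
acceptance table (a set of sets of states). -/
structure OFA (A : Type) : Type 1 where
  Q : Type
  [finQ : Finite Q]
  T : Q → A → Q → Prop
  q0 : Q
  Acc : Set (Set Q)

attribute [instance] OFA.finQ

namespace OFA

variable {A : Type}

/-- Deterministic automaton: at most one successor per state and letter. -/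
def Deterministic (M : OFA A) : Prop :=
  ∀ p a q q', M.T p a q → M.T p a q' → q = q'

/-- Complete automaton: at least one successor per state and letter. -/
def Complete (M : OFA A) : Prop :=
  ∀ p a, ∃ q, M.T p a q

/-- `p` is an initial infinite path of `M` with label `x`. -/
def InitPath (M : OFA A) (p : ℕ → M.Q) (x : ℕ → A) : Prop :=
  p 0 = M.q0 ∧ ∀ i, M.T (p i) (x i) (p (i + 1))

/-- States visited at least once (at a positive index). -/
def runSet (M : OFA A) (p : ℕ → M.Q) : Set M.Q := {q | ∃ i, 0 < i ∧ p i = q}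

/-- States visited infinitely often. -/
def infSet (M : OFA A) (p : ℕ → M.Q) : Set M.Q := {q | ∀ n, ∃ i, n ≤ i ∧ p i = q}

/-- States visited finitely many times but at least once. -/
def finSet (M : OFA A) (p : ℕ → M.Q) : Set M.Q := M.runSet p \ M.infSet p

/-- States visited finitely many times or never. -/
def ninfSet (M : OFA A) (p : ℕ → M.Q) : Set M.Q := (M.infSet p)ᶜ

end OFA

/-- Selector for the set of states associated to a path. -/
inductive CSel | run | inf | fin | ninf

/-- Selector for the comparison relation with a member of the acceptance table. -/
inductive RSel | meet | sub | eq

def OFA.csel {A : Type} (M : OFA A) : CSel → (ℕ → M.Q) → Set M.Q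
  | .run => M.runSet
  | .inf => M.infSet
  | .fin => M.finSet
  | .ninf => M.ninfSet

def RSel.holds {Q : Type} : RSel → Set Q → Set Q → Prop
  | .meet => fun S F => (S ∩ F).Nonempty
  | .sub => fun S F => S ⊆ F
  | .eq => fun S F => S = F

/-- The ω-language accepted by `M` under the condition `(c, r)`. -/
def OFA.Lang {A : Type} (M : OFA A) (c : CSel) (r : RSel) : Set (ℕ → A) :=
  {x | ∃ p, M.InitPath p x ∧ ∃ F ∈ M.Acc, RSel.holds r (M.csel c p) F}

/-- The ω-language accepted by `M` under the condition 𝔸 : some `F ∈ Acc` with `F ⊆ run p`. -/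
def OFA.LangA {A : Type} (M : OFA A) : Set (ℕ → A) :=
  {x | ∃ p, M.InitPath p x ∧ ∃ F ∈ M.Acc, F ⊆ M.runSet p}

/-- The ω-language accepted by `M` under the condition 𝔸' : some `F ∈ Acc` with `F ⊈ run p`. -/
def OFA.LangA' {A : Type} (M : OFA A) : Set (ℕ → A) :=
  {x | ∃ p, M.InitPath p x ∧ ∃ F ∈ M.Acc, ¬ F ⊆ M.runSet p}

/-- The ω-language accepted by `M` under the condition 𝕃 : some `F ∈ Acc` with `F ⊆ inf p`. -/
def OFA.LangL {A : Type} (M : OFA A) : Set (ℕ → A) :=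
  {x | ∃ p, M.InitPath p x ∧ ∃ F ∈ M.Acc, F ⊆ M.infSet p}

/-- The ω-language accepted by `M` under the condition 𝕃' : some `F ∈ Acc` with `F ⊈ inf p`. -/
def OFA.LangL' {A : Type} (M : OFA A) : Set (ℕ → A) :=
  {x | ∃ p, M.InitPath p x ∧ ∃ F ∈ M.Acc, ¬ F ⊆ M.infSet p}

/-- The class of ω-languages of the form `L M` for automata `M` satisfying `P`. -/
def AutClass (A : Type) (P : OFA A → Prop) (L : (M : OFA A) → Set (ℕ → A)) :
    Set (Set (ℕ → A)) :=
  {X | ∃ M : OFA A, P M ∧ L M = X}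

/-- The finite factor `x_i x_{i+1} … x_{j-1}` of the ω-word `x`. -/
def extract {A : Type} (x : ℕ → A) (i j : ℕ) : List A :=
  (List.range (j - i)).map fun k => x (i + k)

/-- The ω-language `V · U^ω`: ω-words of the form `u₀u₁u₂⋯` with `u₀ ∈ V`
and all `uᵢ` (i ≥ 1) nonempty words of `U`, described via cut points. -/
def omegaPiece {A : Type} (V U : Language A) : Set (ℕ → A) :=
  {x | ∃ c : ℕ → ℕ, (∀ i, c i < c (i + 1)) ∧
    extract x 0 (c 0) ∈ V ∧ ∀ i, extract x (c i) (c (i + 1)) ∈ U}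

/-- An ω-language is ω-rational if it is a finite union `⋃ᵢ Vᵢ · Uᵢ^ω`
with all `Vᵢ`, `Uᵢ` rational (regular) languages of finite words. -/
def IsOmegaRat {A : Type} (L : Set (ℕ → A)) : Prop :=
  ∃ (n : ℕ) (V U : Fin n → Language A),
    (∀ i, (V i).IsRegular) ∧ (∀ i, (U i).IsRegular) ∧
    L = ⋃ i, omegaPiece (V i) (U i)

/-- Countable union of closed sets. -/
def IsFsigmaSet {X : Type*} [TopologicalSpace X] (S : Set X) : Prop :=
  ∃ f : ℕ → Set X, (∀ n, IsClosed (f n)) ∧ S = ⋃ n, f n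

/-- Countable intersection of open sets. -/
def IsGdeltaSet {X : Type*} [TopologicalSpace X] (S : Set X) : Prop :=
  ∃ f : ℕ → Set X, (∀ n, IsOpen (f n)) ∧ S = ⋂ n, f n


/-!
If a run `p` has `fin p = F` and `inf p = I`, it stays in `I` from some time `N` on. Cutting it at
successive returns to `q = p N`, between which all of `I` is visited, factors its label into a
prefix labelling a path `q₀ → q` whose visited states outside `I` are exactly `F`, followed by
loops at `q` that visit exactly `I`; conversely such a factorization glues back to a run with
`fin = F`. Recording the set of visited states in the state space makes both kinds of words
regular languages, so FA(fin,=) ⊆ RAT.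

For the other inclusion, `V · U^ω` is Büchi-recognizable by running a DFA for `V` and then a DFA
for `U` that is restarted nondeterministically after each accepted word, finite unions are
recognized by a disjoint union, and a Büchi automaton is simulated under (fin,=) by guessing a
state `f` visited infinitely often.
-/

section

open Filter

variable {A : Type}

theorem extract_self (x : ℕ → A) (i : ℕ) : extract x i i = [] := by
  simp [extract]

theorem extract_succ_right (x : ℕ → A) {i j : ℕ} (h : i ≤ j) :
    extract x i (j + 1) = extract x i j ++ [x j] := by
  unfold extract
  rw [show j + 1 - i = j - i + 1 by omega, List.range_succ, List.map_append]
  simp only [List.map_cons, List.map_nil, show i + (j - i) = j by omega]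

theorem DFA.evalFrom_extract_succ {σ : Type} (D : DFA A σ) (s : σ) (x : ℕ → A) {i j : ℕ}
    (h : i ≤ j) :
    D.evalFrom s (extract x i (j + 1)) = D.step (D.evalFrom s (extract x i j)) (x j) := by
  rw [extract_succ_right x h, DFA.evalFrom_append_singleton]

theorem DFA.evalFrom_extract_one {σ : Type} (D : DFA A σ) (s : σ) (x : ℕ → A) (i : ℕ) :
    D.evalFrom s (extract x i (i + 1)) = D.step s (x i) := by
  rw [D.evalFrom_extract_succ s x le_rfl, extract_self, DFA.evalFrom_nil]

theorem NFA.isRegular_accepts {σ : Type} [Finite σ] (N : NFA A σ) : N.accepts.IsRegular := by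
  classical
  have := Fintype.ofFinite σ
  exact ⟨Set σ, inferInstance, N.toDFA, N.toDFA_correct⟩

theorem isOmegaRat_iUnion {ι : Type} [Finite ι] (V U : ι → Language A)
    (hV : ∀ i, (V i).IsRegular) (hU : ∀ i, (U i).IsRegular) :
    IsOmegaRat (⋃ i, omegaPiece (V i) (U i)) :=
  let e := Finite.equivFin ι
  ⟨Nat.card ι, V ∘ e.symm, U ∘ e.symm, fun _ => hV _, fun _ => hU _,
    (e.symm.surjective.iUnion_comp fun i => omegaPiece (V i) (U i)).symm⟩

def blockIdx (c : ℕ → ℕ) (m : ℕ) : ℕ :=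
  Nat.findGreatest (fun k => c k < m) m

theorem blockIdx_eq {c : ℕ → ℕ} (hc : StrictMono c) {k m : ℕ} (hm : m ∈ Ioc (c k) (c (k + 1))) :
    blockIdx c m = k := by
  refine Nat.findGreatest_eq_iff.2 ⟨hc.le_apply.trans hm.1.le, fun _ => hm.1, fun j hkj _ h => ?_⟩
  exact (hc.monotone hkj).not_gt (h.trans_le hm.2)

theorem StrictMono.exists_mem_Ioc {c : ℕ → ℕ} (hc : StrictMono c) {m : ℕ} (hm : c 0 < m) :
    ∃ k, m ∈ Ioc (c k) (c (k + 1)) := by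
  classical
  have hex : ∃ j, m ≤ c j := ⟨m, hc.le_apply⟩
  obtain ⟨k, hk⟩ : ∃ k, Nat.find hex = k + 1 :=
    Nat.exists_eq_add_one.2 (Nat.pos_of_ne_zero fun h => (h ▸ Nat.find_spec hex).not_gt hm)
  exact ⟨k, not_le.1 (Nat.find_min hex (by omega)), hk ▸ Nat.find_spec hex⟩

def glueBlocks {α : Type*} (c : ℕ → ℕ) (r₀ : ℕ → α) (r : ℕ → ℕ → α) (m : ℕ) : α :=
  if m ≤ c 0 then r₀ m else r (blockIdx c m) m

section glueBlocks

variable {α : Type*} {c : ℕ → ℕ} {r₀ : ℕ → α} {r : ℕ → ℕ → α} {m : ℕ}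

theorem glueBlocks_of_le (hm : m ≤ c 0) : glueBlocks c r₀ r m = r₀ m :=
  if_pos hm

theorem glueBlocks_of_mem_Ioc (hc : StrictMono c) {k : ℕ} (hm : m ∈ Ioc (c k) (c (k + 1))) :
    glueBlocks c r₀ r m = r k m :=
  (if_neg (hc.monotone k.zero_le |>.trans_lt hm.1).not_ge).trans (by rw [blockIdx_eq hc hm])

end glueBlocks

namespace OFA

variable (M : OFA A)

theorem mem_lang_fin_eq {x : ℕ → A} :
    x ∈ M.Lang .fin .eq ↔ ∃ p, M.InitPath p x ∧ M.finSet p ∈ M.Acc :=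
  ⟨fun ⟨p, hp, _, hF, h⟩ => ⟨p, hp, by rwa [show M.finSet p = _ from h]⟩,
    fun ⟨p, hp, hF⟩ => ⟨p, hp, _, hF, rfl⟩⟩

section Visits

variable {M} {p : ℕ → M.Q}

theorem mem_infSet_iff_frequently {q : M.Q} : q ∈ M.infSet p ↔ ∃ᶠ m in atTop, p m = q :=
  frequently_atTop.symm

theorem eventually_mem_infSet : ∀ᶠ m in atTop, p m ∈ M.infSet p := by
  have : ∀ᶠ m in atTop, ∀ q, p m = q → q ∈ M.infSet p := eventually_all.2 fun q => by
    by_cases hq : q ∈ M.infSet p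
    · exact .of_forall fun _ _ => hq
    · exact (not_frequently.1 (mt mem_infSet_iff_frequently.2 hq)).mono fun _ hm h => absurd h hm
  exact this.mono fun m hm => hm _ rfl

theorem infSet_inter_nonempty {F : Set M.Q} (h : ∃ᶠ m in atTop, p m ∈ F) :
    (M.infSet p ∩ F).Nonempty :=
  let ⟨m, hmF, hm⟩ := (h.and_eventually eventually_mem_infSet).exists
  ⟨p m, hm, hmF⟩

theorem image_Ioc_diff_infSet {N : ℕ} (hN : ∀ m, N ≤ m → p m ∈ M.infSet p) :
    p '' Ioc 0 N \ M.infSet p = M.finSet p := by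
  refine Subset.antisymm (sdiff_subset_sdiff_left ?_)
    fun q ⟨⟨m, hm, hmq⟩, hq⟩ => ⟨⟨m, ⟨hm, ?_⟩, hmq⟩, hq⟩
  · exact image_subset_iff.2 fun m hm => ⟨m, hm.1, rfl⟩
  · exact not_lt.1 fun h => hq (hmq ▸ hN m h.le)

theorem exists_infSet_subset_image_Ioc {q : M.Q} (hq : q ∈ M.infSet p) (n : ℕ) :
    ∃ m, n < m ∧ p m = q ∧ M.infSet p ⊆ p '' Ioc n m := by
  have hall : ∀ᶠ m in atTop, ∀ s, s ∈ M.infSet p → s ∈ p '' Ioc n m := by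
    refine eventually_all.2 fun s => ?_
    by_cases hs : s ∈ M.infSet p
    · obtain ⟨t, hts, hnt⟩ :=
        ((mem_infSet_iff_frequently.1 hs).and_eventually (eventually_gt_atTop n)).exists
      exact (eventually_ge_atTop t).mono fun m hm _ => ⟨t, ⟨hnt, hm⟩, hts⟩
    · exact .of_forall fun _ h => absurd h hs
  obtain ⟨m, hmq, hnm, hm⟩ :=
    ((mem_infSet_iff_frequently.1 hq).and_eventually ((eventually_gt_atTop n).and hall)).exists
  exact ⟨m, hnm, hmq, hm⟩

theorem infSet_eq_of_image_Ioc {c : ℕ → ℕ} (hc : StrictMono c) {I : Set M.Q}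
    (hI : ∀ k, p '' Ioc (c k) (c (k + 1)) = I) : M.infSet p = I := by
  refine Subset.antisymm (fun q hq => ?_) fun q hq n => ?_
  · obtain ⟨m, hm, hmq⟩ := hq (c 0 + 1)
    obtain ⟨k, hk⟩ := hc.exists_mem_Ioc hm
    exact hI k ▸ ⟨m, hk, hmq⟩
  · obtain ⟨m, hm, hmq⟩ := (hI n).symm ▸ hq
    exact ⟨m, hc.le_apply.trans hm.1.le, hmq⟩

theorem runSet_eq_of_image_Ioc {c : ℕ → ℕ} (hc : StrictMono c) {I : Set M.Q}
    (hI : ∀ k, p '' Ioc (c k) (c (k + 1)) = I) : M.runSet p = p '' Ioc 0 (c 0) ∪ I := by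
  refine Subset.antisymm (fun q ⟨m, hm, hmq⟩ => ?_) (union_subset ?_ fun q hq => ?_)
  · by_cases hm0 : m ≤ c 0
    · exact .inl ⟨m, ⟨hm, hm0⟩, hmq⟩
    · obtain ⟨k, hk⟩ := hc.exists_mem_Ioc (not_le.1 hm0)
      exact .inr (hI k ▸ ⟨m, hk, hmq⟩)
  · exact image_subset_iff.2 fun m hm => ⟨m, hm.1, rfl⟩
  · obtain ⟨m, hm, hmq⟩ := (hI 0).symm ▸ hq
    exact ⟨m, (c 0).zero_le.trans_lt hm.1, hmq⟩

end Visits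

def IsPathOn (x : ℕ → A) (r : ℕ → M.Q) (i j : ℕ) : Prop :=
  ∀ m, i ≤ m → m < j → M.T (r m) (x m) (r (m + 1))

theorem initPath_glueBlocks {x : ℕ → A} {c : ℕ → ℕ} (hc : StrictMono c) {q : M.Q}
    {r₀ : ℕ → M.Q} {r : ℕ → ℕ → M.Q} (h₀ : r₀ 0 = M.q0) (hr₀ : M.IsPathOn x r₀ 0 (c 0))
    (hr₀q : r₀ (c 0) = q) (hr : ∀ k, M.IsPathOn x (r k) (c k) (c (k + 1)))
    (hrq : ∀ k, r k (c k) = q ∧ r k (c (k + 1)) = q) :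
    M.InitPath (glueBlocks c r₀ r) x := by
  have hblock : ∀ k m, c k ≤ m → m ≤ c (k + 1) → glueBlocks c r₀ r m = r k m := by
    intro k m hkm hmk
    rcases hkm.eq_or_lt with rfl | hkm
    · rcases k with _ | k
      · rw [glueBlocks_of_le le_rfl, hr₀q, (hrq 0).1]
      · rw [glueBlocks_of_mem_Ioc hc ⟨hc (lt_add_one k), le_rfl⟩, (hrq k).2, (hrq (k + 1)).1]
    · exact glueBlocks_of_mem_Ioc hc ⟨hkm, hmk⟩
  refine ⟨(glueBlocks_of_le (c 0).zero_le).trans h₀, fun m => ?_⟩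
  by_cases hm : m < c 0
  · rw [glueBlocks_of_le hm.le, glueBlocks_of_le hm]
    exact hr₀ m m.zero_le hm
  · obtain ⟨k, hk⟩ := hc.exists_mem_Ioc (Nat.lt_succ_of_le (not_lt.1 hm))
    rw [hblock k m (Nat.le_of_lt_succ hk.1) (Nat.le_of_succ_le hk.2),
      hblock k (m + 1) hk.1.le hk.2]
    exact hr k m (Nat.le_of_lt_succ hk.1) (Nat.lt_of_succ_le hk.2)

def visitNFA (p : M.Q) (acc : Set (M.Q × Set M.Q)) : NFA A (M.Q × Set M.Q) where
  step s a := {t | M.T s.1 a t.1 ∧ t.2 = insert t.1 s.2}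
  start := {(p, ∅)}
  accept := acc

theorem mem_visitNFA_evalFrom_extract {p : M.Q} {acc : Set (M.Q × Set M.Q)} {x : ℕ → A}
    {i j : ℕ} (hij : i ≤ j) {t : M.Q × Set M.Q} :
    t ∈ (M.visitNFA p acc).evalFrom {(p, ∅)} (extract x i j) ↔
      ∃ r : ℕ → M.Q, r i = p ∧ M.IsPathOn x r i j ∧ (r j, r '' Ioc i j) = t := by
  induction j, hij using Nat.le_induction generalizing t with
  | base =>
    simp only [extract_self, NFA.evalFrom_nil, mem_singleton_iff, Ioc_self, image_empty]
    exact ⟨fun h => ⟨fun _ => p, rfl, fun m h₁ h₂ => absurd h₂ h₁.not_gt, h.symm⟩,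
      fun ⟨r, hr, _, h⟩ => h ▸ hr ▸ rfl⟩
  | succ j hij ih =>
    have himage : ∀ r : ℕ → M.Q, r '' Ioc i (j + 1) = insert (r (j + 1)) (r '' Ioc i j) := by
      intro r
      rw [← image_insert_eq, ← Order.succ_eq_add_one, insert_Ioc_right_eq_Ioc_succ hij]
    rw [extract_succ_right x hij, NFA.evalFrom_append, NFA.evalFrom_singleton, NFA.mem_stepSet]
    constructor
    · rintro ⟨s, hs, hT, ht⟩
      obtain ⟨r, hri, hr, rfl⟩ := ih.1 hs
      refine ⟨Function.update r (j + 1) t.1, ?_, fun m h₁ h₂ => ?_, ?_⟩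
      · rwa [Function.update_of_ne (by omega)]
      · rcases (Nat.lt_succ_iff.1 h₂).lt_or_eq with hmj | rfl
        · rw [Function.update_of_ne (by omega), Function.update_of_ne (by omega)]
          exact hr m h₁ hmj
        · rwa [Function.update_of_ne (by omega), Function.update_self]
      · rw [himage, Function.update_self, image_congr fun m hm => Function.update_of_ne
          (ne_of_lt (Nat.lt_succ_of_le (mem_Ioc.1 hm).2)) _ _, ← ht]
    · rintro ⟨r, hri, hr, rfl⟩
      exact ⟨_, ih.2 ⟨r, hri, fun m h₁ h₂ => hr m h₁ (by omega), rfl⟩, hr j hij (lt_add_one j),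
        himage r⟩

theorem extract_mem_visitNFA_accepts {p : M.Q} {acc : Set (M.Q × Set M.Q)} {x : ℕ → A}
    {i j : ℕ} (hij : i ≤ j) :
    extract x i j ∈ (M.visitNFA p acc).accepts ↔
      ∃ r : ℕ → M.Q, r i = p ∧ M.IsPathOn x r i j ∧ (r j, r '' Ioc i j) ∈ acc := by
  simp only [NFA.mem_accepts]
  constructor
  · rintro ⟨t, ht, h⟩
    obtain ⟨r, hri, hr, rfl⟩ := (M.mem_visitNFA_evalFrom_extract hij).1 h
    exact ⟨r, hri, hr, ht⟩
  · rintro ⟨r, hri, hr, ht⟩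
    exact ⟨_, ht, (M.mem_visitNFA_evalFrom_extract hij).2 ⟨r, hri, hr, rfl⟩⟩

def prefixLang (F I : Set M.Q) (q : M.Q) : Language A :=
  (M.visitNFA M.q0 {t | F ∈ M.Acc ∧ t.1 = q ∧ t.2 \ I = F}).accepts

def loopLang (q : M.Q) (I : Set M.Q) : Language A :=
  (M.visitNFA q {(q, I)}).accepts

theorem lang_fin_eq_subset_iUnion :
    M.Lang .fin .eq ⊆ ⋃ i : Set M.Q × Set M.Q × M.Q,
      omegaPiece (M.prefixLang i.1 i.2.1 i.2.2) (M.loopLang i.2.2 i.2.1) := by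
  intro x hx
  obtain ⟨p, hp, hF⟩ := M.mem_lang_fin_eq.1 hx
  obtain ⟨N, hN⟩ := eventually_atTop.1 (eventually_mem_infSet (p := p))
  choose f hf using exists_infSet_subset_image_Ioc (hN N le_rfl)
  set c : ℕ → ℕ := fun k => f^[k] N
  have hcs : ∀ k, c k < c (k + 1) := fun k => by
    simp only [c, Function.iterate_succ_apply']
    exact (hf _).1
  have hc : StrictMono c := strictMono_nat_of_lt_succ hcs
  have hcq : ∀ k, p (c k) = p N
    | 0 => rfl
    | k + 1 => by simp only [c, Function.iterate_succ_apply']; exact (hf _).2.1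
  have hblock : ∀ k, p '' Ioc (c k) (c (k + 1)) = M.infSet p := fun k => by
    refine Subset.antisymm (image_subset_iff.2 fun m hm => hN m ?_) ?_
    · exact (hc.monotone k.zero_le).trans hm.1.le
    · simpa only [c, Function.iterate_succ_apply'] using (hf _).2.2
  refine mem_iUnion.2 ⟨(M.finSet p, M.infSet p, p N), c, hcs, ?_, fun k => ?_⟩
  · refine (M.extract_mem_visitNFA_accepts (c 0).zero_le).2 ⟨p, hp.1, fun m _ _ => hp.2 m, ?_⟩
    exact ⟨hF, rfl, M.image_Ioc_diff_infSet hN⟩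
  · refine (M.extract_mem_visitNFA_accepts (hcs k).le).2 ⟨p, hcq k, fun m _ _ => hp.2 m, ?_⟩
    rw [hcq, hblock]
    rfl

theorem iUnion_omegaPiece_subset_lang_fin_eq :
    ⋃ i : Set M.Q × Set M.Q × M.Q,
      omegaPiece (M.prefixLang i.1 i.2.1 i.2.2) (M.loopLang i.2.2 i.2.1) ⊆ M.Lang .fin .eq := by
  simp only [iUnion_subset_iff, Prod.forall]
  rintro F I q x ⟨c, hcs, hpre, hloop⟩
  have hc : StrictMono c := strictMono_nat_of_lt_succ hcs
  obtain ⟨r₀, hr₀0, hr₀, hFacc, hr₀q, hr₀F⟩ :=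
    (M.extract_mem_visitNFA_accepts (c 0).zero_le).1 hpre
  choose r hrq hr hrI using fun k => (M.extract_mem_visitNFA_accepts (hcs k).le).1 (hloop k)
  simp only [mem_singleton_iff, Prod.mk.injEq] at hrI
  have hP := M.initPath_glueBlocks hc hr₀0 hr₀ hr₀q hr fun k => ⟨hrq k, (hrI k).1⟩
  have hblock : ∀ k, glueBlocks c r₀ r '' Ioc (c k) (c (k + 1)) = I := fun k => by
    rw [← (hrI k).2]
    exact image_congr fun m hm => glueBlocks_of_mem_Ioc hc hm
  refine M.mem_lang_fin_eq.2 ⟨_, hP, ?_⟩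
  rw [finSet, M.runSet_eq_of_image_Ioc hc hblock, M.infSet_eq_of_image_Ioc hc hblock,
    union_sdiff_right, image_congr fun m hm => glueBlocks_of_le (mem_Ioc.1 hm).2]
  exact hr₀F ▸ hFacc

theorem isOmegaRat_lang_fin_eq : IsOmegaRat (M.Lang .fin .eq) := by
  rw [(M.lang_fin_eq_subset_iUnion).antisymm M.iUnion_omegaPiece_subset_lang_fin_eq]
  exact isOmegaRat_iUnion _ _ (fun _ => NFA.isRegular_accepts _) fun _ => NFA.isRegular_accepts _

end OFA

section Piece

variable {σ τ : Type} (D : DFA A σ) (E : DFA A τ)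

/-- The flag `true` marks the first letter of each `E`-word, so a run through infinitely many
flagged states restarts `E` infinitely often. -/
inductive PieceStep : σ ⊕ τ × Bool → A → σ ⊕ τ × Bool → Prop
  | readPrefix (s : σ) (a : A) : PieceStep (.inl s) a (.inl (D.step s a))
  | startLoop (s : σ) (a : A) :
      s ∈ D.accept → PieceStep (.inl s) a (.inr (E.step E.start a, true))
  | readLoop (t : τ) (b : Bool) (a : A) : PieceStep (.inr (t, b)) a (.inr (E.step t a, false))
  | restartLoop (t : τ) (b : Bool) (a : A) :
      t ∈ E.accept → PieceStep (.inr (t, b)) a (.inr (E.step E.start a, true))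

variable {D E}

theorem PieceStep.inl_inv {s : σ} {a : A} {y : σ ⊕ τ × Bool} (h : PieceStep D E (.inl s) a y) :
    y = .inl (D.step s a) ∨ s ∈ D.accept ∧ y = .inr (E.step E.start a, true) := by
  cases h with
  | readPrefix => exact .inl rfl
  | startLoop _ _ hs => exact .inr ⟨hs, rfl⟩

theorem PieceStep.inr_inv {t : τ} {b : Bool} {a : A} {y : σ ⊕ τ × Bool}
    (h : PieceStep D E (.inr (t, b)) a y) :
    y = .inr (E.step t a, false) ∨ t ∈ E.accept ∧ y = .inr (E.step E.start a, true) := by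
  cases h with
  | readLoop => exact .inl rfl
  | restartLoop _ _ _ ht => exact .inr ⟨ht, rfl⟩

theorem PieceStep.eq_of_flag {y : σ ⊕ τ × Bool} {a : A} {t : τ}
    (h : PieceStep D E y a (.inr (t, true))) : t = E.step E.start a := by
  cases h <;> rfl

section Run

variable {x : ℕ → A} {P : ℕ → σ ⊕ τ × Bool}
  (hstep : ∀ m, PieceStep D E (P m) (x m) (P (m + 1)))
include hstep

theorem pieceRun_eq_inl (h0 : P 0 = .inl D.start) {n : ℕ}
    (hn : ∀ m ≤ n, ∀ t, P m ≠ .inr (t, true)) {m : ℕ} (hm : m ≤ n) :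
    P m = .inl (D.evalFrom D.start (extract x 0 m)) := by
  induction m with
  | zero => rw [h0, extract_self, DFA.evalFrom_nil]
  | succ m ih =>
    have h := hstep m
    rw [ih (Nat.le_of_succ_le hm)] at h
    rcases h.inl_inv with h | ⟨-, h⟩
    · rw [h, D.evalFrom_extract_succ _ _ m.zero_le]
    · exact absurd h (hn _ hm _)

theorem pieceRun_eq_inr {i n : ℕ} {t : τ} (hi : P (i + 1) = .inr (t, true))
    (hn : ∀ m, i + 1 < m → m ≤ n → ∀ t, P m ≠ .inr (t, true)) {m : ℕ} (him : i + 1 ≤ m)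
    (hmn : m ≤ n) : ∃ b, P m = .inr (E.evalFrom E.start (extract x i m), b) := by
  induction m, him using Nat.le_induction with
  | base =>
    have h := hstep i
    rw [hi] at h
    rw [E.evalFrom_extract_one, ← h.eq_of_flag]
    exact ⟨true, hi⟩
  | succ m him ih =>
    obtain ⟨b, hb⟩ := ih (Nat.le_of_succ_le hmn)
    have h := hstep m
    rw [hb] at h
    rcases h.inr_inv with h | ⟨-, h⟩
    · rw [h, E.evalFrom_extract_succ _ _ (by omega)]
      exact ⟨false, rfl⟩
    · exact absurd h (hn _ (by omega) hmn _)

end Run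

variable (D E)

def pieceOFA [Finite σ] [Finite τ] : OFA A where
  Q := σ ⊕ τ × Bool
  T := PieceStep D E
  q0 := .inl D.start
  Acc := {range fun t => .inr (t, true)}

variable [Finite σ] [Finite τ]

theorem omegaPiece_subset_lang_pieceOFA :
    omegaPiece D.accepts E.accepts ⊆ (pieceOFA D E).Lang .inf .meet := by
  rintro x ⟨c, hcs, hV, hU⟩
  have hc : StrictMono c := strictMono_nat_of_lt_succ hcs
  set P : ℕ → σ ⊕ τ × Bool := glueBlocks c (fun m => .inl (D.evalFrom D.start (extract x 0 m)))
    fun k m => .inr (E.evalFrom E.start (extract x (c k) m), decide (m = c k + 1))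
  have hP : ∀ k m, m ∈ Ioc (c k) (c (k + 1)) →
      P m = .inr (E.evalFrom E.start (extract x (c k) m), decide (m = c k + 1)) :=
    fun k m hm => glueBlocks_of_mem_Ioc hc hm
  have hP₀ : ∀ m ≤ c 0, P m = .inl (D.evalFrom D.start (extract x 0 m)) :=
    fun m hm => glueBlocks_of_le hm
  have hstep : ∀ m, PieceStep D E (P m) (x m) (P (m + 1)) := by
    intro m
    by_cases hm : m < c 0
    · rw [hP₀ m hm.le, hP₀ (m + 1) hm, D.evalFrom_extract_succ _ _ m.zero_le]
      exact .readPrefix _ _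
    obtain ⟨k, hk⟩ := hc.exists_mem_Ioc (Nat.lt_succ_of_le (not_lt.1 hm))
    rw [hP k (m + 1) hk]
    rcases (Nat.le_of_lt_succ hk.1).eq_or_lt with rfl | hkm
    · rw [decide_eq_true rfl, E.evalFrom_extract_one]
      rcases k with _ | k
      · rw [hP₀ _ le_rfl]
        exact .startLoop _ _ hV
      · rw [hP k _ ⟨hc (lt_add_one k), le_rfl⟩]
        exact .restartLoop _ _ _ (hU k)
    · rw [hP k m ⟨hkm, Nat.le_of_succ_le hk.2⟩,
        decide_eq_false (show m + 1 ≠ c k + 1 by omega), E.evalFrom_extract_succ _ _ hkm.le]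
      exact .readLoop _ _ _
  refine ⟨P, ⟨hP₀ 0 (c 0).zero_le, hstep⟩, _, rfl, OFA.infSet_inter_nonempty ?_⟩
  refine frequently_atTop.2 fun n => ⟨c n + 1, hc.le_apply.trans (Nat.le_succ _), ?_⟩
  rw [hP n _ ⟨lt_add_one _, hcs n⟩, decide_eq_true rfl]
  exact mem_range_self _

theorem lang_pieceOFA_subset_omegaPiece :
    (pieceOFA D E).Lang .inf .meet ⊆ omegaPiece D.accepts E.accepts := by
  rintro x ⟨P, ⟨hP0, hstep⟩, _, rfl, z, hz, t, rfl⟩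
  set IsFlag : ℕ → Prop := fun m => ∃ t, P m = .inr (t, true)
  have hinf : {m | IsFlag m}.Infinite := Nat.frequently_atTop_iff_infinite.1 <|
    (OFA.mem_infSet_iff_frequently.1 hz).mono fun m hm => ⟨t, hm⟩
  set μ := Nat.nth IsFlag
  have hμ : StrictMono μ := Nat.nth_strictMono hinf
  have hflag : ∀ k, IsFlag (μ k) := Nat.nth_mem_of_infinite hinf
  have hμ0 : ∀ m < μ 0, ∀ t, P m ≠ .inr (t, true) :=
    fun m hm t h => hm.not_ge (Nat.nth_zero.trans_le (Nat.sInf_le ⟨t, h⟩))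
  have hμk : ∀ k m, μ k < m → m < μ (k + 1) → ∀ t, P m ≠ .inr (t, true) :=
    fun k m h₁ h₂ t h => h₁.not_ge (Nat.le_nth_of_lt_nth_succ h₂ ⟨t, h⟩)
  have hμpos : ∀ k, 0 < μ k := fun k => (Nat.pos_of_ne_zero fun h => by
    obtain ⟨t, ht⟩ := hflag 0
    exact Sum.inl_ne_inr (hP0.symm.trans (h ▸ ht))).trans_le (hμ.monotone k.zero_le)
  refine ⟨fun k => μ k - 1, fun k => Nat.sub_lt_sub_right (hμpos k) (hμ (lt_add_one k)),
    ?_, fun k => ?_⟩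
  · have h := hstep (μ 0 - 1)
    rw [pieceRun_eq_inl hstep hP0 (fun m hm => hμ0 m (by have := hμpos 0; omega)) le_rfl,
      Nat.sub_add_cancel (hμpos 0)] at h
    obtain ⟨t, ht⟩ := hflag 0
    rcases h.inl_inv with h | ⟨hacc, -⟩
    · nomatch ht.symm.trans h
    · exact hacc
  · obtain ⟨t, ht⟩ := hflag k
    have hk := hμ (lt_add_one k)
    have hk0 := hμpos k
    obtain ⟨b, hb⟩ := pieceRun_eq_inr hstep (i := μ k - 1) (n := μ (k + 1) - 1)
      (by rwa [Nat.sub_add_cancel (hμpos k)]) (fun m h₁ h₂ => hμk k m (by omega) (by omega))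
      (by omega) le_rfl
    have h := hstep (μ (k + 1) - 1)
    rw [hb, Nat.sub_add_cancel (hμpos (k + 1))] at h
    obtain ⟨t', ht'⟩ := hflag (k + 1)
    rcases h.inr_inv with h | ⟨hacc, -⟩
    · nomatch ht'.symm.trans h
    · exact hacc

theorem lang_pieceOFA : (pieceOFA D E).Lang .inf .meet = omegaPiece D.accepts E.accepts :=
  (lang_pieceOFA_subset_omegaPiece D E).antisymm (omegaPiece_subset_lang_pieceOFA D E)

theorem exists_lang_inf_meet_eq_omegaPiece {V U : Language A} (hV : V.IsRegular)
    (hU : U.IsRegular) : ∃ M : OFA A, M.Lang .inf .meet = omegaPiece V U := by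
  obtain ⟨σ, _, D, rfl⟩ := hV
  obtain ⟨τ, _, E, rfl⟩ := hU
  exact ⟨pieceOFA D E, lang_pieceOFA D E⟩

end Piece

section Union

variable {ι : Type} (N : ι → OFA A)

inductive UnionStep : Option (Σ i, (N i).Q) → A → Option (Σ i, (N i).Q) → Prop
  | start (i : ι) (a : A) (q : (N i).Q) :
      (N i).T (N i).q0 a q → UnionStep none a (some ⟨i, q⟩)
  | step (i : ι) (p : (N i).Q) (a : A) (q : (N i).Q) :
      (N i).T p a q → UnionStep (some ⟨i, p⟩) a (some ⟨i, q⟩)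

variable {N}

theorem UnionStep.none_inv {a : A} {y : Option (Σ i, (N i).Q)} (h : UnionStep N none a y) :
    ∃ i q, y = some ⟨i, q⟩ ∧ (N i).T (N i).q0 a q := by
  cases h with
  | start i _ q hq => exact ⟨i, q, rfl, hq⟩

theorem UnionStep.some_inv {i : ι} {p : (N i).Q} {a : A} {y : Option (Σ i, (N i).Q)}
    (h : UnionStep N (some ⟨i, p⟩) a y) : ∃ q, y = some ⟨i, q⟩ ∧ (N i).T p a q := by
  cases h with
  | step _ _ _ q hq => exact ⟨q, rfl, hq⟩

variable (N)

def unionOFA [Finite ι] : OFA A where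
  Q := Option (Σ i, (N i).Q)
  T := UnionStep N
  q0 := none
  Acc := ⋃ i, (fun F => (fun q => some ⟨i, q⟩) '' F) '' (N i).Acc

variable [Finite ι]

theorem lang_subset_lang_unionOFA (i : ι) :
    (N i).Lang .inf .meet ⊆ (unionOFA N).Lang .inf .meet := by
  rintro x ⟨p, ⟨hp0, hp⟩, F, hF, f, hf, hfF⟩
  set P : ℕ → Option (Σ i, (N i).Q) := fun m => if m = 0 then none else some ⟨i, p m⟩
  have hP : ∀ m, 0 < m → P m = some ⟨i, p m⟩ := fun m hm => if_neg hm.ne'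
  refine ⟨P, ⟨if_pos rfl, fun m => ?_⟩, _, mem_iUnion.2 ⟨i, mem_image_of_mem _ hF⟩,
    some ⟨i, f⟩, fun n => ?_, mem_image_of_mem _ hfF⟩
  · rw [hP (m + 1) m.succ_pos]
    rcases m.eq_zero_or_pos with rfl | hm
    · exact .start i _ _ (hp0 ▸ hp 0)
    · exact hP m hm ▸ .step i _ _ _ (hp m)
  · obtain ⟨m, hm, hmf⟩ := hf (n + 1)
    exact ⟨m, Nat.le_of_succ_le hm, (hP m (by omega)).trans (by rw [hmf])⟩

theorem lang_unionOFA_subset : (unionOFA N).Lang .inf .meet ⊆ ⋃ i, (N i).Lang .inf .meet := by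
  rintro x ⟨P, ⟨hP0, hP⟩, _, hF', z, hz, hzF'⟩
  obtain ⟨i, F, hF, rfl⟩ := mem_iUnion.1 hF'
  obtain ⟨f, hfF, rfl⟩ := hzF'
  have h0 := hP 0
  rw [hP0] at h0
  obtain ⟨j, q₁, hP1, hq₁⟩ := UnionStep.none_inv h0
  have hstay : ∀ m, ∃ q, P (m + 1) = some ⟨j, q⟩ := by
    intro m
    induction m with
    | zero => exact ⟨q₁, hP1⟩
    | succ m ih =>
      obtain ⟨q, hq⟩ := ih
      have h := hP (m + 1)
      rw [hq] at h
      obtain ⟨q', hq', -⟩ := UnionStep.some_inv h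
      exact ⟨q', hq'⟩
  choose r hr using hstay
  have hvisit : ∀ n, ∃ m, n ≤ m ∧ P (m + 1) = some ⟨i, f⟩ := fun n => by
    obtain ⟨m, hm, hmf⟩ := hz (n + 1)
    exact ⟨m - 1, by omega, by rwa [Nat.sub_add_cancel (by omega)]⟩
  obtain ⟨m, -, hm⟩ := hvisit 0
  obtain ⟨rfl, -⟩ := Sigma.mk.inj_iff.1 (Option.some_injective _ ((hr m).symm.trans hm))
  have hinj : ∀ {q q' : (N j).Q}, (some ⟨j, q⟩ : (unionOFA N).Q) = some ⟨j, q'⟩ → q = q' :=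
    fun h => sigma_mk_injective (β := fun i => (N i).Q) (Option.some_injective _ h)
  refine mem_iUnion.2
    ⟨j, fun | 0 => (N j).q0 | m + 1 => r m, ⟨rfl, ?_⟩, F, hF, f, fun n => ?_, hfF⟩
  · rintro (_ | m)
    · obtain rfl := hinj (hP1.symm.trans (hr 0))
      exact hq₁
    · have h := hP (m + 1)
      rw [hr m] at h
      obtain ⟨q, hq, hT⟩ := UnionStep.some_inv h
      obtain rfl := hinj (hq.symm.trans (hr (m + 1)))
      exact hT
  · obtain ⟨m, hm, hmf⟩ := hvisit n
    exact ⟨m + 1, by omega, hinj ((hr m).symm.trans hmf)⟩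

theorem lang_unionOFA : (unionOFA N).Lang .inf .meet = ⋃ i, (N i).Lang .inf .meet :=
  (lang_unionOFA_subset N).antisymm (iUnion_subset (lang_subset_lang_unionOFA N))

end Union

section Simulation

variable (M : OFA A)

inductive BuchiSimStep : M.Q ⊕ Bool × M.Q × M.Q → A → M.Q ⊕ Bool × M.Q × M.Q → Prop
  | run (p : M.Q) (a : A) (q : M.Q) : M.T p a q → BuchiSimStep (.inl p) a (.inl q)
  | guess (p : M.Q) (a : A) (q f : M.Q) :
      M.T p a q → BuchiSimStep (.inl p) a (.inr (false, q, f))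
  | commit (p : M.Q) (a : A) (f : M.Q) :
      M.T p a f → BuchiSimStep (.inr (false, p, f)) a (.inr (true, f, f))
  | track (p : M.Q) (a : A) (q f : M.Q) :
      M.T p a q → BuchiSimStep (.inr (true, p, f)) a (.inr (true, q, f))

def simState : M.Q ⊕ Bool × M.Q × M.Q → M.Q
  | .inl q => q
  | .inr (_, q, _) => q

variable {M}

theorem BuchiSimStep.simState {s s' : M.Q ⊕ Bool × M.Q × M.Q} {a : A}
    (h : BuchiSimStep M s a s') : M.T (simState M s) a (simState M s') := by
  cases h <;> assumption

theorem BuchiSimStep.eq_of_waiting {p f : M.Q} {a : A} {y : M.Q ⊕ Bool × M.Q × M.Q}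
    (h : BuchiSimStep M (.inr (false, p, f)) a y) : y = .inr (true, f, f) := by
  cases h
  rfl

variable (M)

/-- The waiting state must be visited finitely often and no state tagged by `f` may be, so `f`,
which is entered right after the waiting state, is visited infinitely often. -/
def buchiSimOFA : OFA A where
  Q := M.Q ⊕ Bool × M.Q × M.Q
  T := BuchiSimStep M
  q0 := .inl M.q0
  Acc := {F | ∃ f ∈ ⋃₀ M.Acc, (∃ q, .inr (false, q, f) ∈ F) ∧ ∀ q, .inr (true, q, f) ∉ F}

theorem lang_buchiSimOFA_subset : (buchiSimOFA M).Lang .fin .eq ⊆ M.Lang .inf .meet := by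
  intro x hx
  obtain ⟨P, ⟨hP0, hP⟩, f, ⟨F, hF, hfF⟩, ⟨q, ⟨i, -, hPi⟩, -⟩, htrue⟩ :=
    (buchiSimOFA M).mem_lang_fin_eq.1 hx
  have hcommit : P (i + 1) = .inr (true, f, f) := BuchiSimStep.eq_of_waiting (hPi ▸ hP i)
  have hinf : .inr (true, f, f) ∈ (buchiSimOFA M).infSet P :=
    not_not.1 fun h => htrue f ⟨⟨i + 1, i.succ_pos, hcommit⟩, h⟩
  refine ⟨fun m => simState M (P m), ⟨(congrArg (simState M) hP0).trans rfl,
    fun m => (hP m).simState⟩, F, hF, f, fun n => ?_, hfF⟩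
  obtain ⟨m, hm, hmf⟩ := hinf n
  exact ⟨m, hm, (congrArg (simState M) hmf).trans rfl⟩

def simRun (p : ℕ → M.Q) (N : ℕ) (f : M.Q) (m : ℕ) : M.Q ⊕ Bool × M.Q × M.Q :=
  if m + 1 < N then .inl (p m) else .inr (decide (N ≤ m), p m, f)

section simRun

variable {M} {p : ℕ → M.Q} {N : ℕ} {f : M.Q} {m : ℕ}

theorem simRun_of_lt (hm : m + 1 < N) : simRun M p N f m = .inl (p m) :=
  if_pos hm

theorem simRun_of_eq (hm : m + 1 = N) : simRun M p N f m = .inr (false, p m, f) :=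
  (if_neg (by omega)).trans (by rw [decide_eq_false (by omega)])

theorem simRun_of_le (hm : N ≤ m) : simRun M p N f m = .inr (true, p m, f) :=
  (if_neg (by omega)).trans (by rw [decide_eq_true hm])

theorem simRun_step {x : ℕ → A} (hp : ∀ m, M.T (p m) (x m) (p (m + 1))) (hpN : p N = f) (m : ℕ) :
    BuchiSimStep M (simRun M p N f m) (x m) (simRun M p N f (m + 1)) := by
  rcases lt_trichotomy (m + 2) N with hm | hm | hm
  · rw [simRun_of_lt (by omega), simRun_of_lt hm]
    exact .run _ _ _ (hp m)
  · rw [simRun_of_lt (by omega), simRun_of_eq hm]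
    exact .guess _ _ _ _ (hp m)
  · rcases (Nat.le_of_lt_succ hm).eq_or_lt with hm | hm
    · rw [simRun_of_eq hm.symm, simRun_of_le hm.le, ← hm, hpN]
      exact .commit _ _ _ (by rw [← hpN, hm]; exact hp m)
    · rw [simRun_of_le (by omega), simRun_of_le (by omega)]
      exact .track _ _ _ _ (hp m)

theorem eq_of_simRun_eq_inr_true {q : M.Q} (h : simRun M p N f m = .inr (true, q, f)) :
    p m = q ∧ N ≤ m := by
  by_cases hNm : N ≤ m
  · rw [simRun_of_le hNm] at h
    cases h
    exact ⟨rfl, hNm⟩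
  · rcases (Nat.succ_le_of_lt (not_le.1 hNm)).lt_or_eq with hm | hm
    · rw [simRun_of_lt hm] at h
      nomatch h
    · rw [simRun_of_eq hm] at h
      nomatch h

end simRun

theorem lang_subset_lang_buchiSimOFA : M.Lang .inf .meet ⊆ (buchiSimOFA M).Lang .fin .eq := by
  rintro x ⟨p, ⟨hp0, hp⟩, F, hF, f, hf, hfF⟩
  obtain ⟨N₀, hN₀⟩ := eventually_atTop.1 (OFA.eventually_mem_infSet (p := p))
  obtain ⟨N, hN, hpN⟩ := hf (N₀ + 2)
  refine (buchiSimOFA M).mem_lang_fin_eq.2 ⟨simRun M p N f,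
    ⟨(simRun_of_lt (by omega)).trans (by rw [hp0]; rfl), simRun_step hp hpN⟩, f, ⟨F, hF, hfF⟩,
    ⟨p (N - 1), ⟨N - 1, by omega, simRun_of_eq (by omega)⟩, fun h => ?_⟩, ?_⟩
  · obtain ⟨m, hm, hmq⟩ := h N
    rw [simRun_of_le hm] at hmq
    nomatch hmq
  · rintro q ⟨⟨m, -, hmq⟩, hq⟩
    obtain ⟨rfl, hNm⟩ := eq_of_simRun_eq_inr_true hmq
    refine hq fun n => ?_
    obtain ⟨m', hm', hm'q⟩ := hN₀ m (by omega) (max n N)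
    exact ⟨m', le_of_max_le_left hm', by rw [simRun_of_le (le_of_max_le_right hm'), hm'q]⟩

theorem lang_buchiSimOFA : (buchiSimOFA M).Lang .fin .eq = M.Lang .inf .meet :=
  (lang_buchiSimOFA_subset M).antisymm (lang_subset_lang_buchiSimOFA M)

end Simulation

theorem exists_lang_inf_meet_eq_of_isOmegaRat {L : Set (ℕ → A)} (hL : IsOmegaRat L) :
    ∃ M : OFA A, M.Lang .inf .meet = L := by
  obtain ⟨n, V, U, hV, hU, rfl⟩ := hL
  choose N hN using fun i => exists_lang_inf_meet_eq_omegaPiece (hV i) (hU i)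
  exact ⟨unionOFA N, by simp only [lang_unionOFA, hN]⟩

end

theorem stmt_18_general (A : Type) :
    AutClass A (fun _ : OFA A => True) (fun M => M.Lang CSel.fin RSel.eq) = {L : Set (ℕ → A) | IsOmegaRat L} := by
  ext L
  constructor
  · rintro ⟨M, -, rfl⟩
    exact M.isOmegaRat_lang_fin_eq
  · intro hL
    obtain ⟨M, rfl⟩ := exists_lang_inf_meet_eq_of_isOmegaRat hL
    exact ⟨buchiSimOFA M, trivial, lang_buchiSimOFA M⟩

theorem stmt_18 (A : Type) [Fintype A] :
    AutClass A (fun _ : OFA A => True) (fun M => M.Lang CSel.fin RSel.eq) = {L : Set (ℕ → A) | IsOmegaRat L} :=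
  stmt_18_general A
end

section
/- The ω-language a(a*b)^ω + b(a+b)*a^ω = {x ∈ {a,b}^ω : x₀ = a and x contains infinitely many occurrences of b} ∪ {x ∈ {a,b}^ω : x₀ = b and x contains only finitely many occurrences of b} belongs to CDFA(fin,=) but belongs neither to Fσ^R nor to Gδ^R. -/
open Set

/-!
Reading `a = true` and `b = false`, the automaton `abAutomaton` remembers whether the prefix read
so far contains an `a`, whether it contains an `a` followed later by a `b`, and its last letter.
A run visits the state `b` (prefix in `b⁺`) finitely often but at least once iff `x₀ = b` and `x`
contains an `a`; the state `a` (prefix in `b*a⁺`) iff `x` contains `a … b`; and the state `ab`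
(prefix containing `a … b` and ending with `b`) iff moreover `x` has only finitely many `b`s.
The table `{F | b ∈ F ↔ (a ∈ F → ab ∈ F)}` thus accepts exactly the words of the language.

The set of words with finitely many `b`s is countable, dense and co-dense in the Baire space
`ℕ → Bool`, hence not Gδ. Prepending `b` pulls the language back to this set and prepending `a`
pulls its complement back to it, so the language is neither Gδ nor Fσ.
-/

open Filter

namespace OFA

variable {A S : Type}

def trace (δ : S → A → S) (q₀ : S) (x : ℕ → A) : ℕ → S
  | 0 => q₀
  | n + 1 => δ (trace δ q₀ x n) (x n)

theorem mem_finSet_iff {M : OFA A} {p : ℕ → M.Q} {q : M.Q} :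
    q ∈ M.finSet p ↔ (∃ n, p (n + 1) = q) ∧ ∃ N, ∀ n, N ≤ n → p (n + 1) ≠ q := by
  simp only [finSet, runSet, infSet, Set.mem_sdiff, Set.mem_ofPred_eq, not_forall, not_exists,
    not_and]
  refine and_congr ⟨fun ⟨i, hi, h⟩ => ⟨i - 1, by rwa [Nat.sub_add_cancel hi]⟩,
    fun ⟨n, h⟩ => ⟨n + 1, n.succ_pos, h⟩⟩ ⟨fun ⟨N, h⟩ => ⟨N, fun n hn => h _ (by omega)⟩,
    fun ⟨N, h⟩ => ⟨N + 1, fun i hi => ?_⟩⟩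
  obtain ⟨n, rfl⟩ : ∃ n, i = n + 1 := ⟨i - 1, by omega⟩
  exact h n (by omega)

variable [Finite S]

abbrev ofTransition (δ : S → A → S) (q₀ : S) (Acc : Set (Set S)) : OFA A where
  Q := S
  T p a q := δ p a = q
  q0 := q₀
  Acc := Acc

theorem deterministic_ofTransition (δ : S → A → S) (q₀ : S) (Acc : Set (Set S)) :
    (ofTransition δ q₀ Acc).Deterministic :=
  fun _ _ _ _ h h' => h ▸ h'

theorem complete_ofTransition (δ : S → A → S) (q₀ : S) (Acc : Set (Set S)) :
    (ofTransition δ q₀ Acc).Complete :=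
  fun p a => ⟨δ p a, rfl⟩

theorem initPath_ofTransition_iff {δ : S → A → S} {q₀ : S} {Acc : Set (Set S)} {p : ℕ → S}
    {x : ℕ → A} : (ofTransition δ q₀ Acc).InitPath p x ↔ p = trace δ q₀ x := by
  constructor
  · rintro ⟨h0, hstep⟩
    funext n
    induction n with
    | zero => exact h0
    | succ n ih => rw [← hstep n, ih]; rfl
  · rintro rfl
    exact ⟨rfl, fun _ => rfl⟩

theorem lang_fin_eq_ofTransition (δ : S → A → S) (q₀ : S) (Acc : Set (Set S)) :
    (ofTransition δ q₀ Acc).Lang .fin .eq =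
      {x | (ofTransition δ q₀ Acc).finSet (trace δ q₀ x) ∈ Acc} := by
  ext x
  constructor
  · rintro ⟨p, hp, F, hF, hfin⟩
    obtain rfl := initPath_ofTransition_iff.1 hp
    obtain rfl : (ofTransition δ q₀ Acc).finSet (trace δ q₀ x) = F := hfin
    exact hF
  · exact fun h => ⟨_, initPath_ofTransition_iff.2 rfl, _, h, rfl⟩

end OFA

def PrefixHasA (x : ℕ → Bool) (n : ℕ) : Prop := ∃ i < n, x i = true

def PrefixHasAB (x : ℕ → Bool) (n : ℕ) : Prop := ∃ j < n, x j = false ∧ PrefixHasA x j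

section Prefix

variable {x : ℕ → Bool} {m n : ℕ}

theorem PrefixHasA.mono (h : PrefixHasA x m) (hmn : m ≤ n) : PrefixHasA x n :=
  let ⟨i, hi, hx⟩ := h; ⟨i, hi.trans_le hmn, hx⟩

theorem PrefixHasAB.mono (h : PrefixHasAB x m) (hmn : m ≤ n) : PrefixHasAB x n :=
  let ⟨j, hj, hx⟩ := h; ⟨j, hj.trans_le hmn, hx⟩

theorem PrefixHasAB.prefixHasA (h : PrefixHasAB x n) : PrefixHasA x n :=
  let ⟨_, hj, _, ha⟩ := h; ha.mono hj.le

theorem prefixHasA_succ : PrefixHasA x (n + 1) ↔ PrefixHasA x n ∨ x n = true :=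
  Nat.exists_lt_succ_right

theorem prefixHasAB_succ :
    PrefixHasAB x (n + 1) ↔ PrefixHasAB x n ∨ x n = false ∧ PrefixHasA x n :=
  Nat.exists_lt_succ_right

theorem not_prefixHasA_zero : ¬ PrefixHasA x 0 := fun ⟨_, hi, _⟩ => Nat.not_lt_zero _ hi

theorem not_prefixHasAB_zero : ¬ PrefixHasAB x 0 := fun ⟨_, hj, _⟩ => Nat.not_lt_zero _ hj

end Prefix

inductive ABState | start | b | a | ab | aba
  deriving DecidableEq

instance : Fintype ABState :=
  ⟨{.start, .b, .a, .ab, .aba}, fun q => by cases q <;> decide⟩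

namespace ABState

def step : ABState → Bool → ABState
  | start, true => a | start, false => b
  | b, true => a | b, false => b
  | a, true => a | a, false => ab
  | ab, true => aba | ab, false => ab
  | aba, true => aba | aba, false => ab

open Classical in
theorem trace_step_succ (x : ℕ → Bool) (n : ℕ) :
    OFA.trace step start x (n + 1) =
      if PrefixHasAB x (n + 1) then (if x n then aba else ab)
      else if PrefixHasA x (n + 1) then a else b := by
  induction n with
  | zero =>
    simp only [OFA.trace, zero_add, prefixHasAB_succ, prefixHasA_succ, not_prefixHasA_zero,
      not_prefixHasAB_zero, false_or, and_false]
    cases x 0 <;> rfl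
  | succ n ih =>
    have hA := @PrefixHasAB.prefixHasA x (n + 1)
    rw [OFA.trace, ih, prefixHasAB_succ (n := n + 1), prefixHasA_succ (n := n + 1)]
    by_cases hAB : PrefixHasAB x (n + 1) <;> by_cases hA' : PrefixHasA x (n + 1) <;>
      cases x n <;> cases x (n + 1) <;> simp_all [step]

section Trace

variable {x : ℕ → Bool} {n : ℕ}

theorem trace_succ_eq_b : OFA.trace step start x (n + 1) = b ↔ ¬ PrefixHasA x (n + 1) := by
  have := @PrefixHasAB.prefixHasA x (n + 1)
  rw [trace_step_succ]
  split_ifs <;> simp_all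

theorem trace_succ_eq_a :
    OFA.trace step start x (n + 1) = a ↔ PrefixHasA x (n + 1) ∧ ¬ PrefixHasAB x (n + 1) := by
  rw [trace_step_succ]
  split_ifs <;> simp_all

theorem trace_succ_eq_ab :
    OFA.trace step start x (n + 1) = ab ↔ PrefixHasAB x (n + 1) ∧ x n = false := by
  rw [trace_step_succ]
  split_ifs <;> simp_all

end Trace

end ABState

open ABState in
abbrev abAutomaton : OFA Bool :=
  OFA.ofTransition step start {F | b ∈ F ↔ (a ∈ F → ab ∈ F)}

namespace ABState

variable {x : ℕ → Bool}

theorem b_mem_finSet_iff :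
    b ∈ abAutomaton.finSet (OFA.trace step start x) ↔ x 0 = false ∧ ∃ i, x i = true := by
  rw [OFA.mem_finSet_iff]
  simp only [ne_eq, trace_succ_eq_b, not_not]
  constructor
  · rintro ⟨⟨n, hn⟩, N, hN⟩
    obtain ⟨i, -, hi⟩ := hN N le_rfl
    exact ⟨Bool.eq_false_iff.2 fun h0 => hn (PrefixHasA.mono ⟨0, Nat.one_pos, h0⟩ (by omega)),
      i, hi⟩
  · rintro ⟨h0, i, hi⟩
    refine ⟨⟨0, fun ⟨j, hj, hx⟩ => ?_⟩, i, fun n hn => ⟨i, by omega, hi⟩⟩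
    obtain rfl : j = 0 := by omega
    simp_all

theorem a_mem_finSet_iff :
    a ∈ abAutomaton.finSet (OFA.trace step start x) ↔ ∃ n, PrefixHasAB x n := by
  rw [OFA.mem_finSet_iff]
  simp only [ne_eq, trace_succ_eq_a]
  constructor
  · rintro ⟨⟨n, hA, -⟩, N, hN⟩
    refine ⟨max N n + 1, by_contra fun h => hN (max N n) (le_max_left _ _) ⟨hA.mono ?_, h⟩⟩
    omega
  · rintro ⟨m, hm⟩
    have hT : ∃ i, x i = true := let ⟨i, _, hi⟩ := hm.prefixHasA; ⟨i, hi⟩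
    -- just after the first `a` of `x` the run is in state `a`
    refine ⟨⟨Nat.find hT, ⟨_, Nat.lt_succ_self _, Nat.find_spec hT⟩, ?_⟩,
      m, fun n hn ⟨_, h⟩ => h (hm.mono (by omega))⟩
    rintro ⟨j, hj, -, i, hij, hi⟩
    exact absurd (Nat.find_min' hT hi) (by omega)

theorem ab_mem_finSet_iff :
    ab ∈ abAutomaton.finSet (OFA.trace step start x) ↔
      (∃ n, PrefixHasAB x n) ∧ ∃ N, ∀ n, N ≤ n → x n = true := by
  rw [OFA.mem_finSet_iff]
  simp only [ne_eq, trace_succ_eq_ab, not_and, Bool.not_eq_false]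
  constructor
  · rintro ⟨⟨n, hAB, -⟩, N, hN⟩
    exact ⟨⟨_, hAB⟩, max N n, fun k hk => hN k (by omega) (hAB.mono (by omega))⟩
  · rintro ⟨⟨m, j, hj, hxj, hAj⟩, N, hN⟩
    exact ⟨⟨j, prefixHasAB_succ.2 (Or.inr ⟨hxj, hAj⟩), hxj⟩, N, fun n hn _ => hN n hn⟩

end ABState

def abLang : Set (ℕ → Bool) :=
  {x : ℕ → Bool | x 0 = true ∧ ∀ n, ∃ i, n ≤ i ∧ x i = false} ∪
    {x : ℕ → Bool | x 0 = false ∧ ∃ N, ∀ i, N ≤ i → x i = true}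

theorem not_eventually_true_iff {x : ℕ → Bool} :
    (¬ ∃ N, ∀ i, N ≤ i → x i = true) ↔ ∀ n, ∃ i, n ≤ i ∧ x i = false := by
  simp only [not_exists, not_forall, Bool.not_eq_true, exists_prop]

open ABState in
theorem abAutomaton_finSet_mem_acc_iff {x : ℕ → Bool} :
    abAutomaton.finSet (OFA.trace step start x) ∈ abAutomaton.Acc ↔ x ∈ abLang := by
  change (b ∈ _ ↔ (a ∈ _ → ab ∈ _)) ↔ _
  rw [b_mem_finSet_iff, a_mem_finSet_iff, ab_mem_finSet_iff]
  have hEv : (∃ N, ∀ n, N ≤ n → x n = true) → ∃ i, x i = true :=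
    fun ⟨N, hN⟩ => ⟨N, hN N le_rfl⟩
  have hAB : (∃ n, PrefixHasAB x n) → ∃ i, x i = true :=
    fun ⟨_, hn⟩ => let ⟨i, _, hi⟩ := hn.prefixHasA; ⟨i, hi⟩
  have hInf : (∃ i, x i = true) → (∀ n, ∃ i, n ≤ i ∧ x i = false) → ∃ n, PrefixHasAB x n :=
    fun ⟨i, hi⟩ h => let ⟨j, hij, hj⟩ := h (i + 1); ⟨j + 1, j, j.lt_succ_self, hj, i, hij, hi⟩
  have := @not_eventually_true_iff x
  simp only [abLang, Set.mem_union, Set.mem_ofPred_eq]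
  cases h0 : x 0
  · simp only [Bool.false_eq_true, false_and, true_and, false_or]
    tauto
  · have := hInf ⟨0, h0⟩
    simp only [Bool.true_eq_false, false_and, true_and, or_false]
    tauto

theorem Set.Countable.not_isGδ_of_dense {X : Type*} [TopologicalSpace X] [T1Space X]
    [BaireSpace X] [Nonempty X] {s : Set X} (hs : s.Countable) (hd : Dense s)
    (hdc : Dense sᶜ) : ¬ IsGδ s := fun hG => by
  simpa using (hd.inter_of_Gδ hG hs.isGδ_compl hdc).nonempty

section Sequences

variable {α : Type*}

theorem dense_of_forall_prefix_mem [TopologicalSpace α] {s : Set (ℕ → α)} {y : ℕ → α}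
    (h : ∀ (x : ℕ → α) (N : ℕ), (fun n => if n < N then x n else y n) ∈ s) : Dense s :=
  fun x => mem_closure_of_tendsto
    (tendsto_pi_nhds.2 fun n => tendsto_const_nhds.congr'
      ((eventually_gt_atTop n).mono fun _ hN => (if_pos hN).symm))
    (Eventually.of_forall (h x))

theorem countable_setOf_eventually_eq [Countable α] (a : α) :
    {x : ℕ → α | ∀ᶠ n in atTop, x n = a}.Countable := by
  refine (countable_range fun f : Σ N, Fin N → α => fun n =>
    if h : n < f.1 then f.2 ⟨n, h⟩ else a).mono fun x hx => ?_
  obtain ⟨N, hN⟩ := eventually_atTop.1 hx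
  refine ⟨⟨N, fun i => x i⟩, funext fun n => ?_⟩
  dsimp only
  split_ifs with h
  · rfl
  · exact (hN n (not_lt.1 h)).symm

theorem not_isGδ_setOf_eventually_eq [TopologicalSpace α] [DiscreteTopology α] [Countable α]
    {a b : α} (hab : a ≠ b) : ¬ IsGδ {x : ℕ → α | ∀ᶠ n in atTop, x n = a} := by
  have : Nonempty α := ⟨a⟩
  refine (countable_setOf_eventually_eq a).not_isGδ_of_dense
    (dense_of_forall_prefix_mem (y := fun _ => a) fun x N => ?_)
    (dense_of_forall_prefix_mem (y := fun _ => b) fun x N => ?_)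
  · exact (eventually_ge_atTop N).mono fun n hn => if_neg (not_lt.2 hn)
  · exact fun h => ((h.and (eventually_ge_atTop N)).exists).elim
      fun n ⟨hn, hN⟩ => hab ((if_neg (not_lt.2 hN)).symm.trans hn).symm

def natCons (c : α) (y : ℕ → α) : ℕ → α
  | 0 => c
  | n + 1 => y n

theorem continuous_natCons [TopologicalSpace α] (c : α) : Continuous (natCons c) :=
  continuous_pi fun n => by
    cases n with
    | zero => exact continuous_const
    | succ n => exact continuous_apply n

theorem eventually_natCons_eq_iff {c a : α} {y : ℕ → α} :
    (∀ᶠ n in atTop, natCons c y n = a) ↔ ∀ᶠ n in atTop, y n = a := by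
  simp only [← tendsto_pure]
  exact (tendsto_add_atTop_iff_nat 1).symm

end Sequences

theorem natCons_preimage_abLang :
    natCons false ⁻¹' abLang = {y | ∀ᶠ n in atTop, y n = true} := by
  ext y
  simp [abLang, natCons.eq_1, ← eventually_atTop, eventually_natCons_eq_iff]

theorem natCons_preimage_compl_abLang :
    natCons true ⁻¹' abLangᶜ = {y | ∀ᶠ n in atTop, y n = true} := by
  ext y
  simp [abLang, natCons.eq_1, ← not_eventually_true_iff, ← eventually_atTop,
    eventually_natCons_eq_iff]

theorem abLang_not_isFsigmaSet : ¬ IsFsigmaSet abLang := by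
  rintro ⟨f, hf, h⟩
  apply not_isGδ_setOf_eventually_eq Bool.false_ne_true.symm
  rw [← natCons_preimage_compl_abLang, h, Set.compl_iUnion]
  exact (IsGδ.iInter_of_isOpen fun n => (hf n).isOpen_compl).preimage (continuous_natCons true)

theorem abLang_not_isGdeltaSet : ¬ IsGdeltaSet abLang := fun h => by
  apply not_isGδ_setOf_eventually_eq Bool.false_ne_true.symm
  rw [← natCons_preimage_abLang]
  exact (isGδ_iff_eq_iInter_nat.2 h).preimage (continuous_natCons false)

theorem abLang_mem_autClass :
    abLang ∈ AutClass Bool (fun M : OFA Bool => M.Deterministic ∧ M.Complete)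
      (fun M => M.Lang CSel.fin RSel.eq) :=
  ⟨abAutomaton, ⟨OFA.deterministic_ofTransition _ _ _, OFA.complete_ofTransition _ _ _⟩,
    (OFA.lang_fin_eq_ofTransition _ _ _).trans (Set.ext fun _ => abAutomaton_finSet_mem_acc_iff)⟩

/-- Over the alphabet `Bool` we take `a := true` and `b := false`. -/
theorem stmt_19 :
    ({x : ℕ → Bool | x 0 = true ∧ ∀ n, ∃ i, n ≤ i ∧ x i = false} ∪ {x : ℕ → Bool | x 0 = false ∧ ∃ N, ∀ i, N ≤ i → x i = true}) ∈ AutClass Bool (fun M : OFA Bool => M.Deterministic ∧ M.Complete) (fun M => M.Lang CSel.fin RSel.eq) ∧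
    ¬ (IsFsigmaSet ({x : ℕ → Bool | x 0 = true ∧ ∀ n, ∃ i, n ≤ i ∧ x i = false} ∪ {x : ℕ → Bool | x 0 = false ∧ ∃ N, ∀ i, N ≤ i → x i = true}) ∧ IsOmegaRat ({x : ℕ → Bool | x 0 = true ∧ ∀ n, ∃ i, n ≤ i ∧ x i = false} ∪ {x : ℕ → Bool | x 0 = false ∧ ∃ N, ∀ i, N ≤ i → x i = true})) ∧
    ¬ (IsGdeltaSet ({x : ℕ → Bool | x 0 = true ∧ ∀ n, ∃ i, n ≤ i ∧ x i = false} ∪ {x : ℕ → Bool | x 0 = false ∧ ∃ N, ∀ i, N ≤ i → x i = true}) ∧ IsOmegaRat ({x : ℕ → Bool | x 0 = true ∧ ∀ n, ∃ i, n ≤ i ∧ x i = false} ∪ {x : ℕ → Bool | x 0 = false ∧ ∃ N, ∀ i, N ≤ i → x i = true})) :=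
  ⟨abLang_mem_autClass, fun h => abLang_not_isFsigmaSet h.1, fun h => abLang_not_isGdeltaSet h.1⟩
end
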